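/- arXiv:2006.13000 — 4 statements merged into one kernel-verified Lean document; each statement's English description precedes it below -/
import Mathlib

section
/- Let c > 0, m > 0, V > 0, ε > 0, t > 0, and let g, h : [0,t] → ℝ be continuous. Suppose a, b : [0,t] → [0,∞) are continuous and satisfy, for all τ ∈ [0,t], a(τ) ≤ c·∫_τ^t b(σ) dσ + g(t−τ) and b(τ) ≤ c·((m+V²)·∫_τ^t a(σ) dσ + V·∫_τ^t b(σ) dσ) + h(t−τ); and suppose A, B : [0,t] → ℝ are continuous and satisfy, for all τ ∈ [0,t], the equalities A(τ) = c·∫_τ^t B(σ) dσ + g(t−τ) + ε and B(τ) = c·((m+V²)·∫_τ^t A(σ) dσ + V·∫_τ^t B(σ) dσ) + h(t−τ) + ε. Then a(τ) ≤ A(τ) and b(τ) ≤ B(τ) for all τ ∈ [0,t]. (Comparison principle: solutions of the ε-perturbed linear Volterra system dominate subsolutions.) -/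
/-!
Pass to the defects `u = A - a` and `v = B - b`: they satisfy the Volterra inequalities with
nonnegative coefficients and an extra `+ ε`. Let `τ₀` be the largest point of `[0, t]` where
`min u v ≤ 0`. On `(τ₀, t]` both defects are positive, so all integrals from `τ₀` to `t` are
nonnegative, and then the inequalities give `u τ₀, v τ₀ ≥ ε > 0`, a contradiction.
-/

open Set MeasureTheory

theorem pos_on_Icc_of_forall_pos_on_Ioc_imp {f : ℝ → ℝ} {s t : ℝ}
    (hf : ContinuousOn f (Icc s t))
    (hstep : ∀ τ ∈ Icc s t, (∀ σ ∈ Ioc τ t, 0 < f σ) → 0 < f τ) :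
    ∀ τ ∈ Icc s t, 0 < f τ := by
  by_contra! hbad
  obtain ⟨τ, hτ, hfτ⟩ := hbad
  have hcompact : IsCompact (Icc s t ∩ f ⁻¹' Iic 0) :=
    isCompact_Icc.of_isClosed_subset
      (hf.preimage_isClosed_of_isClosed isClosed_Icc isClosed_Iic) inter_subset_left
  obtain ⟨τ₀, ⟨hτ₀, hfτ₀⟩, hlast⟩ := hcompact.exists_isGreatest ⟨τ, hτ, hfτ⟩
  refine (hstep τ₀ hτ₀ fun σ hσ => ?_).not_ge hfτ₀
  by_contra! hfσ
  exact hσ.1.not_ge (hlast ⟨⟨hτ₀.1.trans hσ.1.le, hσ.2⟩, hfσ⟩)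

theorem intervalIntegral_nonneg_of_pos_on_Ioc {f : ℝ → ℝ} {τ t : ℝ} (hτt : τ ≤ t)
    (hf : ∀ σ ∈ Ioc τ t, 0 < f σ) : 0 ≤ ∫ σ in τ..t, f σ := by
  rw [intervalIntegral.integral_of_le hτt]
  exact setIntegral_nonneg measurableSet_Ioc fun σ hσ => (hf σ hσ).le

theorem pos_of_cooperative_volterra_supersolution {u v : ℝ → ℝ} {s t α β γ δ ε : ℝ}
    (hα : 0 ≤ α) (hβ : 0 ≤ β) (hγ : 0 ≤ γ) (hδ : 0 ≤ δ) (hε : 0 < ε)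
    (hu : ContinuousOn u (Icc s t)) (hv : ContinuousOn v (Icc s t))
    (hu_ge : ∀ τ ∈ Icc s t,
      α * (∫ σ in τ..t, u σ) + β * (∫ σ in τ..t, v σ) + ε ≤ u τ)
    (hv_ge : ∀ τ ∈ Icc s t,
      γ * (∫ σ in τ..t, u σ) + δ * (∫ σ in τ..t, v σ) + ε ≤ v τ) :
    ∀ τ ∈ Icc s t, 0 < u τ ∧ 0 < v τ := by
  have hmin := pos_on_Icc_of_forall_pos_on_Ioc_imp (hu.inf hv) fun τ hτ hpos => by
    have hIu : 0 ≤ ∫ σ in τ..t, u σ :=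
      intervalIntegral_nonneg_of_pos_on_Ioc hτ.2 fun σ hσ => (lt_inf_iff.1 (hpos σ hσ)).1
    have hIv : 0 ≤ ∫ σ in τ..t, v σ :=
      intervalIntegral_nonneg_of_pos_on_Ioc hτ.2 fun σ hσ => (lt_inf_iff.1 (hpos σ hσ)).2
    exact lt_inf_iff.2
      ⟨by linarith [hu_ge τ hτ, mul_nonneg hα hIu, mul_nonneg hβ hIv],
        by linarith [hv_ge τ hτ, mul_nonneg hγ hIu, mul_nonneg hδ hIv]⟩
  exact fun τ hτ => lt_inf_iff.1 (hmin τ hτ)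

theorem intervalIntegral_sub_of_continuousOn_Icc {f g : ℝ → ℝ} {s t τ : ℝ}
    (hf : ContinuousOn f (Icc s t)) (hg : ContinuousOn g (Icc s t)) (hτ : τ ∈ Icc s t) :
    ∫ σ in τ..t, (f σ - g σ) = (∫ σ in τ..t, f σ) - ∫ σ in τ..t, g σ :=
  intervalIntegral.integral_sub
    ((hf.mono (Icc_subset_Icc_left hτ.1)).intervalIntegrable_of_Icc hτ.2)
    ((hg.mono (Icc_subset_Icc_left hτ.1)).intervalIntegrable_of_Icc hτ.2)

theorem volterra_comparison_principle_general
    (c m V ε t : ℝ) (hc : 0 < c) (hm : 0 < m) (hV : 0 < V) (hε : 0 < ε)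
    (g h a b A B : ℝ → ℝ)
    (ha : ContinuousOn a (Icc 0 t)) (hb : ContinuousOn b (Icc 0 t))
    (hA : ContinuousOn A (Icc 0 t)) (hB : ContinuousOn B (Icc 0 t))
    (hasub : ∀ τ ∈ Icc (0:ℝ) t, a τ ≤ c * (∫ σ in τ..t, b σ) + g (t - τ))
    (hbsub : ∀ τ ∈ Icc (0:ℝ) t,
      b τ ≤ c * ((m + V ^ 2) * (∫ σ in τ..t, a σ) + V * (∫ σ in τ..t, b σ)) + h (t - τ))
    (hAeq : ∀ τ ∈ Icc (0:ℝ) t, A τ = c * (∫ σ in τ..t, B σ) + g (t - τ) + ε)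
    (hBeq : ∀ τ ∈ Icc (0:ℝ) t,
      B τ = c * ((m + V ^ 2) * (∫ σ in τ..t, A σ) + V * (∫ σ in τ..t, B σ)) + h (t - τ) + ε) :
    ∀ τ ∈ Icc (0:ℝ) t, a τ ≤ A τ ∧ b τ ≤ B τ := by
  have hpos := pos_of_cooperative_volterra_supersolution (u := fun σ => A σ - a σ)
    (v := fun σ => B σ - b σ) (γ := c * (m + V ^ 2)) (δ := c * V)
    le_rfl hc.le (by positivity) (by positivity) hε
    (hA.sub ha) (hB.sub hb)
    (fun τ hτ => by
      rw [intervalIntegral_sub_of_continuousOn_Icc hB hb hτ]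
      linarith [hasub τ hτ, hAeq τ hτ])
    (fun τ hτ => by
      rw [intervalIntegral_sub_of_continuousOn_Icc hA ha hτ,
        intervalIntegral_sub_of_continuousOn_Icc hB hb hτ]
      linarith [hbsub τ hτ, hBeq τ hτ])
  exact fun τ hτ => ⟨(sub_pos.1 (hpos τ hτ).1).le, (sub_pos.1 (hpos τ hτ).2).le⟩

/-- **Comparison principle: solutions of the ε-perturbed linear Volterra system dominate
subsolutions.** -/
theorem volterra_comparison_principle
    (c m V ε t : ℝ) (hc : 0 < c) (hm : 0 < m) (hV : 0 < V) (hε : 0 < ε) (ht : 0 < t)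
    (g h a b A B : ℝ → ℝ)
    (hg : ContinuousOn g (Icc 0 t)) (hh : ContinuousOn h (Icc 0 t))
    (ha : ContinuousOn a (Icc 0 t)) (hb : ContinuousOn b (Icc 0 t))
    (ha0 : ∀ τ ∈ Icc (0:ℝ) t, 0 ≤ a τ) (hb0 : ∀ τ ∈ Icc (0:ℝ) t, 0 ≤ b τ)
    (hA : ContinuousOn A (Icc 0 t)) (hB : ContinuousOn B (Icc 0 t))
    (hasub : ∀ τ ∈ Icc (0:ℝ) t, a τ ≤ c * (∫ σ in τ..t, b σ) + g (t - τ))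
    (hbsub : ∀ τ ∈ Icc (0:ℝ) t,
      b τ ≤ c * ((m + V ^ 2) * (∫ σ in τ..t, a σ) + V * (∫ σ in τ..t, b σ)) + h (t - τ))
    (hAeq : ∀ τ ∈ Icc (0:ℝ) t, A τ = c * (∫ σ in τ..t, B σ) + g (t - τ) + ε)
    (hBeq : ∀ τ ∈ Icc (0:ℝ) t,
      B τ = c * ((m + V ^ 2) * (∫ σ in τ..t, A σ) + V * (∫ σ in τ..t, B σ)) + h (t - τ) + ε) :
    ∀ τ ∈ Icc (0:ℝ) t, a τ ≤ A τ ∧ b τ ≤ B τ :=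
  volterra_comparison_principle_general c m V ε t hc hm hV hε g h a b A B ha hb hA hB hasub hbsub
    hAeq hBeq
end

section
/- Let C > 0 and C' > 0. Then for every ϖ ≥ 2C, all u, v ∈ ℝ³, and all real 0 ≤ s ≤ t: −ϖ⟨v⟩t + ϖ⟨u⟩s + C|v|(t−s) − C'|v−u|² ≤ −(ϖ/2)⟨v⟩(t−s) − (C'/2)|v−u|² + (ϖ²/(2C'))·s². Equivalently, e^{−ϖ⟨v⟩t}·e^{ϖ⟨u⟩s}·e^{C|v|(t−s)}·e^{−C'|v−u|²} ≤ e^{−(ϖ/2)⟨v⟩(t−s)}·e^{(ϖ²/(2C'))s²}·e^{−(C'/2)|v−u|²}. -/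
/-!
The weight `⟨·⟩` is 1-Lipschitz, so `⟨u⟩ ≤ ⟨v⟩ + |v - u|`; the resulting cross term `ϖ|v - u|s` is
split by Young's inequality into `(C'/2)|v - u|² + (ϖ²/(2C'))s²`, and since `C|v| ≤ (ϖ/2)⟨v⟩` the
growth `C|v|(t - s)` is absorbed by half of the decay `ϖ⟨v⟩(t - s)`.
-/

open Real

theorem sqrt_one_add_sq_le_add (a : ℝ) {b : ℝ} (hb : 0 ≤ b) :
    √(1 + (a + b) ^ 2) ≤ √(1 + a ^ 2) + b := by
  have ha : a ≤ √(1 + a ^ 2) := le_sqrt_of_sq_le (by linarith)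
  refine sqrt_le_iff.2 ⟨by positivity, ?_⟩
  nlinarith [sq_sqrt (show 0 ≤ 1 + a ^ 2 by positivity)]

section JapaneseBracket

variable {E : Type*} [SeminormedAddCommGroup E]

theorem norm_le_sqrt_one_add_norm_sq (v : E) : ‖v‖ ≤ √(1 + ‖v‖ ^ 2) :=
  le_sqrt_of_sq_le (by linarith)

theorem sqrt_one_add_norm_sq_le_add_norm_sub (u v : E) :
    √(1 + ‖u‖ ^ 2) ≤ √(1 + ‖v‖ ^ 2) + ‖v - u‖ := calc
  √(1 + ‖u‖ ^ 2) ≤ √(1 + (‖v‖ + ‖v - u‖) ^ 2) := by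
    gcongr
    simpa [norm_sub_rev] using norm_le_insert' u v
  _ ≤ √(1 + ‖v‖ ^ 2) + ‖v - u‖ := sqrt_one_add_sq_le_add _ (norm_nonneg _)

end JapaneseBracket

theorem mul_le_half_mul_sq_add_sq_div {c : ℝ} (hc : 0 < c) (x y : ℝ) :
    x * y ≤ c / 2 * x ^ 2 + y ^ 2 / (2 * c) := by
  have h : 0 ≤ (c * x - y) ^ 2 / (2 * c) := by positivity
  have e : (c * x - y) ^ 2 / (2 * c) = c / 2 * x ^ 2 + y ^ 2 / (2 * c) - x * y := by
    field_simp
    ring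
  linarith

/-- **Exponent-comparison inequality** used to absorb the exponential growth factors along the
characteristics: for `ϖ ≥ 2C`, with `⟨v⟩ = √(1+|v|²)`,
`−ϖ⟨v⟩t + ϖ⟨u⟩s + C|v|(t−s) − C′|v−u|² ≤ −(ϖ/2)⟨v⟩(t−s) − (C′/2)|v−u|² + (ϖ²/(2C′))s²`,
equivalently the corresponding inequality between products of exponentials. -/
theorem exponent_comparison (C C' : ℝ) (hC : 0 < C) (hC' : 0 < C') :
    ∀ ϖ : ℝ, 2 * C ≤ ϖ → ∀ u v : EuclideanSpace ℝ (Fin 3), ∀ s t : ℝ, 0 ≤ s → s ≤ t →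
      (-(ϖ * Real.sqrt (1 + ‖v‖ ^ 2) * t) + ϖ * Real.sqrt (1 + ‖u‖ ^ 2) * s
          + C * ‖v‖ * (t - s) - C' * ‖v - u‖ ^ 2
        ≤ -(ϖ / 2) * Real.sqrt (1 + ‖v‖ ^ 2) * (t - s) - (C' / 2) * ‖v - u‖ ^ 2
          + (ϖ ^ 2 / (2 * C')) * s ^ 2) ∧
      (Real.exp (-(ϖ * Real.sqrt (1 + ‖v‖ ^ 2) * t)) * Real.exp (ϖ * Real.sqrt (1 + ‖u‖ ^ 2) * s)
          * Real.exp (C * ‖v‖ * (t - s)) * Real.exp (-(C' * ‖v - u‖ ^ 2))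
        ≤ Real.exp (-(ϖ / 2) * Real.sqrt (1 + ‖v‖ ^ 2) * (t - s))
          * Real.exp ((ϖ ^ 2 / (2 * C')) * s ^ 2)
          * Real.exp (-(C' / 2) * ‖v - u‖ ^ 2)) := by
  intro ϖ hϖ u v s t hs hst
  have hϖ₀ : 0 ≤ ϖ := by linarith
  have drift : C * ‖v‖ * (t - s) ≤ ϖ / 2 * √(1 + ‖v‖ ^ 2) * (t - s) := by
    have := norm_le_sqrt_one_add_norm_sq v
    gcongr
    linarith
  have shift : ϖ * √(1 + ‖u‖ ^ 2) * s ≤ ϖ * √(1 + ‖v‖ ^ 2) * s + ϖ * ‖v - u‖ * s := by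
    have := sqrt_one_add_norm_sq_le_add_norm_sub u v
    have := mul_le_mul_of_nonneg_right (mul_le_mul_of_nonneg_left this hϖ₀) hs
    linarith
  have young : ϖ * ‖v - u‖ * s ≤ C' / 2 * ‖v - u‖ ^ 2 + ϖ ^ 2 / (2 * C') * s ^ 2 := by
    have := mul_le_half_mul_sq_add_sq_div hC' ‖v - u‖ (ϖ * s)
    rw [mul_pow] at this
    linarith [show ϖ ^ 2 * s ^ 2 / (2 * C') = ϖ ^ 2 / (2 * C') * s ^ 2 by ring]
  constructor
  · linarith
  · simp only [← exp_add]
    exact exp_le_exp.2 (by linarith)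
end

section
/- Let σ₁ < T be reals, c > 0, σ₂ ∈ (0, T − σ₁], and set η = (c/10)·σ₂². Let φ : [σ₁, T] → ℝ be twice continuously differentiable with φ(s) ≤ 0 for all s ∈ [σ₁,T], φ(T) = 0, −φ(σ₁) > η, and such that φ''(s) ≥ c/2 for every s ∈ [σ₁,T] with −φ(s) ≤ η. Then −φ(s) > η for all s ∈ [σ₁, T − σ₂]. (Barrier lemma: under the field's convexifying effect near the boundary, the normal coordinate of a trajectory stays quantitatively away from the boundary except near the final bounce time.) -/
/-!
Suppose `-φ(s₀) ≤ η` for some `s₀ ≤ T - σ₂`, and let `s₁ ≤ s₀` be the first time with `φ ≥ -η`;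
there `φ' ≥ 0`. Since `φ'' > 0` wherever `φ ≥ -η`, from `s₁` on `φ` keeps increasing and never
returns below `-η`, so `φ'' ≥ c/2` on all of `[s₁, T]`. Integrating twice,
`φ(T) ≥ -η + (c/4)(T - s₁)² ≥ -η + (c/4)σ₂² > 0`, contradicting `φ(T) = 0`.
-/

open Set Filter Topology

theorem monotoneOn_Icc_of_hasDerivWithinAt_nonneg {f f' : ℝ → ℝ} {a b : ℝ}
    (hf : ∀ x ∈ Icc a b, HasDerivWithinAt f (f' x) (Icc a b) x)
    (hf' : ∀ x ∈ Ioo a b, 0 ≤ f' x) : MonotoneOn f (Icc a b) :=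
  monotoneOn_of_hasDerivWithinAt_nonneg (convex_Icc a b)
    (fun x hx => (hf x hx).continuousWithinAt)
    (fun x hx => by
      rw [interior_Icc] at hx ⊢
      exact (hf x (Ioo_subset_Icc_self hx)).mono Ioo_subset_Icc_self)
    (fun x hx => hf' x (by rwa [interior_Icc] at hx))

theorem sub_le_sub_of_hasDerivWithinAt_le {f g f' g' : ℝ → ℝ} {a b x : ℝ}
    (hf : ∀ x ∈ Icc a b, HasDerivWithinAt f (f' x) (Icc a b) x)
    (hg : ∀ x ∈ Icc a b, HasDerivWithinAt g (g' x) (Icc a b) x)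
    (hle : ∀ x ∈ Ioo a b, g' x ≤ f' x) (hx : x ∈ Icc a b) :
    g x - g a ≤ f x - f a := by
  have hmono : MonotoneOn (f - g) (Icc a b) :=
    monotoneOn_Icc_of_hasDerivWithinAt_nonneg (fun y hy => (hf y hy).sub (hg y hy))
      (fun y hy => sub_nonneg.2 (hle y hy))
  have := hmono (left_mem_Icc.2 (hx.1.trans hx.2)) hx hx.1
  simp only [Pi.sub_apply] at this
  linarith

theorem add_mul_sq_le_of_deriv2_ge {f f' f'' : ℝ → ℝ} {a b k : ℝ} (hab : a ≤ b)
    (hf : ∀ x ∈ Icc a b, HasDerivWithinAt f (f' x) (Icc a b) x)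
    (hf' : ∀ x ∈ Icc a b, HasDerivWithinAt f' (f'' x) (Icc a b) x)
    (hk : ∀ x ∈ Icc a b, k ≤ f'' x) (ha : 0 ≤ f' a) :
    f a + k / 2 * (b - a) ^ 2 ≤ f b := by
  have hlin : ∀ x ∈ Icc a b, k * (x - a) ≤ f' x := by
    intro x hx
    have := sub_le_sub_of_hasDerivWithinAt_le hf'
      (fun y _ => (((hasDerivAt_id y).sub_const a).const_mul k).hasDerivWithinAt)
      (fun y hy => by simpa using hk y (Ioo_subset_Icc_self hy)) hx
    simp only [id_eq, sub_self, mul_zero] at this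
    linarith
  have hquad : ∀ y, HasDerivAt (fun x => k / 2 * (x - a) ^ 2) (k * (y - a)) y := fun y =>
    ((((hasDerivAt_id' y).sub_const a).fun_pow 2).const_mul (k / 2)).congr_deriv (by ring)
  have := sub_le_sub_of_hasDerivWithinAt_le hf (fun y _ => (hquad y).hasDerivWithinAt)
    (fun y hy => hlin y (Ioo_subset_Icc_self hy)) (right_mem_Icc.2 hab)
  simp only [sub_self] at this
  linarith

theorem IsMaxOn.hasDerivWithinAt_Icc_right_nonneg {f : ℝ → ℝ} {f' a b : ℝ} (hab : a < b)
    (hmax : IsMaxOn f (Icc a b) b) (hf : HasDerivWithinAt f f' (Icc a b) b) : 0 ≤ f' := by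
  have hcone : a - b ∈ posTangentConeAt (Icc a b) b :=
    sub_mem_posTangentConeAt_of_segment_subset ((segment_eq_Icc' b a).trans_subset
      (by rw [min_eq_right hab.le, max_eq_left hab.le]))
  have := hmax.localize.hasFDerivWithinAt_nonpos hf.hasFDerivWithinAt hcone
  rw [ContinuousLinearMap.toSpanSingleton_apply, smul_eq_mul] at this
  exact nonneg_of_mul_nonpos_right this (sub_neg.2 hab)

theorem exists_le_and_deriv_nonneg_of_lt_of_le {f f' : ℝ → ℝ} {a b x L : ℝ}
    (hf : ∀ y ∈ Icc a b, HasDerivWithinAt f (f' y) (Icc a b) y)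
    (ha : f a < L) (hx : x ∈ Icc a b) (hLx : L ≤ f x) :
    ∃ t ∈ Ioc a x, L ≤ f t ∧ 0 ≤ f' t := by
  have hsub : Icc a x ⊆ Icc a b := Icc_subset_Icc_right hx.2
  have hclosed : IsClosed (Icc a x ∩ f ⁻¹' Ici L) :=
    ContinuousOn.preimage_isClosed_of_isClosed
      (fun y hy => ((hf y (hsub hy)).continuousWithinAt).mono hsub) isClosed_Icc isClosed_Ici
  obtain ⟨t, ⟨htIcc, hLt⟩, hleast⟩ :=
    (isCompact_Icc.of_isClosed_subset hclosed inter_subset_left).exists_isLeast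
      ⟨x, right_mem_Icc.2 hx.1, hLx⟩
  have hat : a < t := htIcc.1.lt_of_ne (by rintro rfl; exact (not_le.2 ha) hLt)
  have hmax : IsMaxOn f (Icc a t) t := by
    intro y hy
    show f y ≤ f t
    rcases hy.2.eq_or_lt with rfl | hyt
    · exact le_rfl
    · by_contra! h
      exact (not_le.2 hyt) (hleast ⟨⟨hy.1, hyt.le.trans htIcc.2⟩, hLt.trans h.le⟩)
  exact ⟨t, ⟨hat, htIcc.2⟩, hLt, hmax.hasDerivWithinAt_Icc_right_nonneg hat
    ((hf t (hsub htIcc)).mono (Icc_subset_Icc_right (htIcc.2.trans hx.2)))⟩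

theorem HasDerivWithinAt.eventually_nhdsGT_lt {g : ℝ → ℝ} {g' a b x : ℝ}
    (hg : HasDerivWithinAt g g' (Icc a b) x) (hx : x ∈ Ico a b) (hpos : 0 < g') :
    ∀ᶠ y in 𝓝[>] x, g x < g y := by
  have hslope := (hasDerivWithinAt_iff_tendsto_slope' self_notMem_Ioi).1
    (hg.mono_of_mem_nhdsWithin (Icc_mem_nhdsGT_of_mem hx))
  filter_upwards [hslope.eventually (lt_mem_nhds hpos), self_mem_nhdsWithin] with y hy hxy
  exact (slope_pos_iff_of_le (le_of_lt hxy)).1 hy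

theorem le_of_deriv_nonneg_of_deriv2_pos_on_superlevel {f f' f'' : ℝ → ℝ} {a b L : ℝ}
    (hf : ∀ x ∈ Icc a b, HasDerivWithinAt f (f' x) (Icc a b) x)
    (hf' : ∀ x ∈ Icc a b, HasDerivWithinAt f' (f'' x) (Icc a b) x)
    (hpos : ∀ x ∈ Icc a b, L ≤ f x → 0 < f'' x) (ha : L ≤ f a) (ha' : 0 ≤ f' a) :
    ∀ x ∈ Icc a b, L ≤ f x := by
  suffices Icc a b ⊆ {x | L ≤ f x ∧ 0 ≤ f' x} from fun x hx => (this hx).1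
  refine IsClosed.Icc_subset_of_forall_mem_nhdsWithin ?_ ⟨ha, ha'⟩ ?_
  · have hcf : ContinuousOn f (Icc a b) := fun x hx => (hf x hx).continuousWithinAt
    have hcf' : ContinuousOn f' (Icc a b) := fun x hx => (hf' x hx).continuousWithinAt
    convert (hcf.preimage_isClosed_of_isClosed isClosed_Icc (isClosed_Ici (a := L))).inter
      (hcf'.preimage_isClosed_of_isClosed isClosed_Icc (isClosed_Ici (a := 0))) using 1
    ext x
    simp only [mem_inter_iff, mem_ofPred_eq, mem_preimage, mem_Ici]
    tauto
  · rintro x ⟨⟨hLx, hx'⟩, hx⟩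
    obtain ⟨u, hxu, hu⟩ := (mem_nhdsGT_iff_exists_Ioo_subset' hx.2).1
      ((hf' x (Ico_subset_Icc_self hx)).eventually_nhdsGT_lt hx
        (hpos x (Ico_subset_Icc_self hx) hLx))
    have hxv : x < min u b := lt_min hxu hx.2
    have hsub : Icc x (min u b) ⊆ Icc a b := Icc_subset_Icc hx.1 (min_le_right u b)
    have hmono : MonotoneOn f (Icc x (min u b)) :=
      monotoneOn_Icc_of_hasDerivWithinAt_nonneg (fun y hy => (hf y (hsub hy)).mono hsub)
        (fun y hy => hx'.trans (hu ⟨hy.1, hy.2.trans_le (min_le_left u b)⟩).le)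
    refine mem_of_superset (Ioo_mem_nhdsGT hxv) fun y hy => ⟨?_, ?_⟩
    · exact hLx.trans (hmono (left_mem_Icc.2 hxv.le) (Ioo_subset_Icc_self hy) hy.1.le)
    · exact hx'.trans (hu ⟨hy.1, hy.2.trans_le (min_le_left u b)⟩).le

theorem barrier_lemma_general
    (σ₁ T c σ₂ : ℝ) (hc : 0 < c) (hσ₂0 : 0 < σ₂)
    (φ φ' φ'' : ℝ → ℝ)
    (hd1 : ∀ s ∈ Icc σ₁ T, HasDerivWithinAt φ (φ' s) (Icc σ₁ T) s)
    (hd2 : ∀ s ∈ Icc σ₁ T, HasDerivWithinAt φ' (φ'' s) (Icc σ₁ T) s)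
    (hT : φ T = 0)
    (hinit : (c / 10) * σ₂ ^ 2 < -φ σ₁)
    (hconvex : ∀ s ∈ Icc σ₁ T, -φ s ≤ (c / 10) * σ₂ ^ 2 → c / 2 ≤ φ'' s) :
    ∀ s ∈ Icc σ₁ (T - σ₂), (c / 10) * σ₂ ^ 2 < -φ s := by
  intro s₀ hs₀
  by_contra! hs₀η
  obtain ⟨s₁, hs₁, hφs₁, hφ's₁⟩ :=
    exists_le_and_deriv_nonneg_of_lt_of_le hd1 (L := -((c / 10) * σ₂ ^ 2)) (by linarith)
      ⟨hs₀.1, hs₀.2.trans (by linarith)⟩ (by linarith)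
  have hsub : Icc s₁ T ⊆ Icc σ₁ T := Icc_subset_Icc_left hs₁.1.le
  have hd1' (x) (hx : x ∈ Icc s₁ T) := (hd1 x (hsub hx)).mono hsub
  have hd2' (x) (hx : x ∈ Icc s₁ T) := (hd2 x (hsub hx)).mono hsub
  have hconvex' (x) (hx : x ∈ Icc s₁ T) (hφx : -((c / 10) * σ₂ ^ 2) ≤ φ x) : c / 2 ≤ φ'' x :=
    hconvex x (hsub hx) (by linarith)
  have hstay := le_of_deriv_nonneg_of_deriv2_pos_on_superlevel hd1' hd2'
    (fun x hx hφx => by linarith [hconvex' x hx hφx]) hφs₁ hφ's₁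
  have hgrow := add_mul_sq_le_of_deriv2_ge (by linarith [hs₁.2, hs₀.2]) hd1' hd2'
    (fun x hx => hconvex' x hx (hstay x hx)) hφ's₁
  have hgap : σ₂ ≤ T - s₁ := by linarith [hs₁.2, hs₀.2]
  nlinarith [mul_le_mul_of_nonneg_left (pow_le_pow_left₀ hσ₂0.le hgap 2) hc.le,
    mul_pos hc (pow_pos hσ₂0 2)]

/-- **Barrier lemma:** under the field's convexifying effect near the boundary (`φ'' ≥ c/2`
whenever `−φ ≤ η := (c/10)σ₂²`), the normal coordinate `−φ` of a trajectory with `φ ≤ 0`,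
`φ(T) = 0` and `−φ(σ₁) > η` stays quantitatively away from the boundary, `−φ > η`, on all of
`[σ₁, T−σ₂]`. -/
theorem barrier_lemma
    (σ₁ T c σ₂ : ℝ) (hσ₁T : σ₁ < T) (hc : 0 < c) (hσ₂0 : 0 < σ₂) (hσ₂ : σ₂ ≤ T - σ₁)
    (φ φ' φ'' : ℝ → ℝ)
    (hd1 : ∀ s ∈ Icc σ₁ T, HasDerivWithinAt φ (φ' s) (Icc σ₁ T) s)
    (hd2 : ∀ s ∈ Icc σ₁ T, HasDerivWithinAt φ' (φ'' s) (Icc σ₁ T) s)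
    (hcont : ContinuousOn φ'' (Icc σ₁ T))
    (hnonpos : ∀ s ∈ Icc σ₁ T, φ s ≤ 0)
    (hT : φ T = 0)
    (hinit : (c / 10) * σ₂ ^ 2 < -φ σ₁)
    (hconvex : ∀ s ∈ Icc σ₁ T, -φ s ≤ (c / 10) * σ₂ ^ 2 → c / 2 ≤ φ'' s) :
    ∀ s ∈ Icc σ₁ (T - σ₂), (c / 10) * σ₂ ^ 2 < -φ s :=
  barrier_lemma_general σ₁ T c σ₂ hc hσ₂0 φ φ' φ'' hd1 hd2 hT hinit hconvex
end

section
/- Let ξ : ℝ³ → ℝ be twice continuously differentiable, let E : ℝ × ℝ³ → ℝ³ be continuous, let a < b be reals, and let (X,V) : [a,b] → ℝ³ × ℝ³ be continuously differentiable with X'(s) = V(s) and V'(s) = E(s, X(s)) for all s ∈ [a,b]. If ξ(X(a)) = ξ(X(b)) = 0, then |V(b) · ∇ξ(X(b))| ≤ ((b−a)/2) · sup_{s ∈ [a,b]} |V(s) · (∇²ξ(X(s)) V(s)) + E(s,X(s)) · ∇ξ(X(s))|, and the same bound holds for |V(a) · ∇ξ(X(a))|. (Time–angle relation: the normal component of the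 velocity at a bounce is controlled by the duration of the bounce interval times the maximal normal acceleration.) -/
/-!
Along the trajectory put `f = ξ ∘ X`, so that `f' = g := V · ∇ξ(X)` and
`g' = V · ∇²ξ(X) V + E · ∇ξ(X)`, bounded by `K`. Since `f(a) = f(b)`, `g` has mean zero on
`[a, b]`, while being `K`-Lipschitz; hence
`|g(b)| (b - a) = |∫ (g(b) - g(s)) ds| ≤ ∫ K (b - s) ds = K (b - a)² / 2`, and symmetrically at `a`.
-/

open Set MeasureTheory intervalIntegral
open scoped RealInnerProductSpace

section MeanZeroLipschitz

variable {g : ℝ → ℝ} {a b K : ℝ}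

theorem abs_right_le_of_lipschitz_of_integral_eq_zero (hab : a < b)
    (hg : ∀ x ∈ Icc a b, ∀ y ∈ Icc a b, |g x - g y| ≤ K * |x - y|)
    (hint : IntervalIntegrable g volume a b) (h0 : ∫ s in a..b, g s = 0) :
    |g b| ≤ (b - a) / 2 * K := by
  have key : |g b| * (b - a) ≤ K * ((b - a) ^ 2 / 2) :=
    calc |g b| * (b - a) = |∫ s in a..b, (g b - g s)| := by
          rw [integral_sub intervalIntegrable_const hint, h0, intervalIntegral.integral_const, smul_eq_mul,
            sub_zero, abs_mul, abs_of_pos (sub_pos.2 hab), mul_comm]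
      _ ≤ ∫ s in a..b, |g b - g s| := abs_integral_le_integral_abs hab.le
      _ ≤ ∫ s in a..b, K * (b - s) := by
          refine integral_mono_on hab.le (intervalIntegrable_const.sub hint).abs
            ((intervalIntegrable_const.sub intervalIntegral.intervalIntegrable_id).const_mul K)
            fun s hs => ?_
          simpa [abs_of_nonneg (sub_nonneg.2 hs.2)] using hg b (right_mem_Icc.2 hab.le) s hs
      _ = K * ((b - a) ^ 2 / 2) := by
          simp only [intervalIntegral.integral_const_mul, integral_sub intervalIntegrable_const
            intervalIntegral.intervalIntegrable_id, intervalIntegral.integral_const, integral_id,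
            smul_eq_mul]
          ring
  exact le_of_mul_le_mul_right (key.trans_eq (by ring)) (sub_pos.2 hab)

theorem abs_left_le_of_lipschitz_of_integral_eq_zero (hab : a < b)
    (hg : ∀ x ∈ Icc a b, ∀ y ∈ Icc a b, |g x - g y| ≤ K * |x - y|)
    (hint : IntervalIntegrable g volume a b) (h0 : ∫ s in a..b, g s = 0) :
    |g a| ≤ (b - a) / 2 * K := by
  have hreflect : ∀ x ∈ Icc a b, a + b - x ∈ Icc a b := fun x hx =>
    ⟨by linarith [hx.2], by linarith [hx.1]⟩
  have := abs_right_le_of_lipschitz_of_integral_eq_zero (g := fun s => g (a + b - s)) hab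
    (fun x hx y hy => by
      simpa [abs_sub_comm x y] using hg _ (hreflect x hx) _ (hreflect y hy))
    (by simpa using (hint.comp_sub_left (a + b)).symm)
    (by simpa [integral_comp_sub_left] using h0)
  simpa using this

end MeanZeroLipschitz

theorem abs_deriv_endpoints_le_of_eq {f g g' : ℝ → ℝ} {a b K : ℝ} (hab : a < b)
    (hf : ∀ s ∈ Icc a b, HasDerivWithinAt f (g s) (Icc a b) s)
    (hg : ∀ s ∈ Icc a b, HasDerivWithinAt g (g' s) (Icc a b) s)
    (hK : ∀ s ∈ Icc a b, |g' s| ≤ K) (hfab : f a = f b) :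
    |g b| ≤ (b - a) / 2 * K ∧ |g a| ≤ (b - a) / 2 * K := by
  have hlip : ∀ x ∈ Icc a b, ∀ y ∈ Icc a b, |g x - g y| ≤ K * |x - y| := fun x hx y hy =>
    (convex_Icc a b).norm_image_sub_le_of_norm_hasDerivWithin_le hg hK hy hx
  have hint : IntervalIntegrable g volume a b :=
    (ContinuousOn.mono (fun s hs => (hg s hs).continuousWithinAt)
      (uIcc_of_le hab.le).subset).intervalIntegrable
  have h0 : ∫ s in a..b, g s = 0 := by
    rw [integral_eq_sub_of_hasDeriv_right_of_le hab.le (fun s hs => (hf s hs).continuousWithinAt)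
      (fun s hs => ((hf s (Ioo_subset_Icc_self hs)).hasDerivAt
        (Icc_mem_nhds hs.1 hs.2)).hasDerivWithinAt) hint, hfab, sub_self]
  exact ⟨abs_right_le_of_lipschitz_of_integral_eq_zero hab hlip hint h0,
    abs_left_le_of_lipschitz_of_integral_eq_zero hab hlip hint h0⟩

section Gradient

variable {F : Type*} [NormedAddCommGroup F] [InnerProductSpace ℝ F] [CompleteSpace F]

theorem HasGradientAt.comp_hasDerivWithinAt {ξ : F → ℝ} {ξ' : F} {X : ℝ → F}
    {S : Set ℝ} {s : ℝ} {V : F} (hξ : HasGradientAt ξ ξ' (X s))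
    (hX : HasDerivWithinAt X V S s) : HasDerivWithinAt (fun t => ξ (X t)) ⟪ξ', V⟫ S s := by
  exact hξ.hasFDerivAt.comp_hasDerivWithinAt s hX

theorem ContDiff.gradient {ξ : F → ℝ} {n : WithTop ℕ∞} (hξ : ContDiff ℝ (n + 1) ξ) :
    ContDiff ℝ n (gradient ξ) :=
  (InnerProductSpace.toDual ℝ F).symm.contDiff.comp (hξ.fderiv_right le_rfl)

end Gradient

theorem time_angle_relation_general
    (ξ : EuclideanSpace ℝ (Fin 3) → ℝ) (hξ : ContDiff ℝ 2 ξ)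
    (E : ℝ → EuclideanSpace ℝ (Fin 3) → EuclideanSpace ℝ (Fin 3))
    (a b : ℝ) (hab : a < b)
    (X V : ℝ → EuclideanSpace ℝ (Fin 3))
    (hX : ∀ s ∈ Icc a b, HasDerivWithinAt X (V s) (Icc a b) s)
    (hV : ∀ s ∈ Icc a b, HasDerivWithinAt V (E s (X s)) (Icc a b) s)
    (ha0 : ξ (X a) = 0) (hb0 : ξ (X b) = 0) :
    ∀ K : ℝ,
      (∀ s ∈ Icc a b,
        |⟪V s, (fderiv ℝ (gradient ξ) (X s)) (V s)⟫ + ⟪E s (X s), gradient ξ (X s)⟫| ≤ K) →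
      |⟪V b, gradient ξ (X b)⟫| ≤ ((b - a) / 2) * K ∧
      |⟪V a, gradient ξ (X a)⟫| ≤ ((b - a) / 2) * K := by
  intro K hK
  have hξ' : Differentiable ℝ ξ := hξ.differentiable (by norm_num)
  have hgrad : Differentiable ℝ (gradient ξ) :=
    (ContDiff.gradient (n := 1) hξ).differentiable one_ne_zero
  refine abs_deriv_endpoints_le_of_eq (f := fun t => ξ (X t))
    (g := fun t => ⟪V t, gradient ξ (X t)⟫) hab (fun s hs => ?_)
    (fun s hs => ?_) hK (ha0.trans hb0.symm)
  · rw [real_inner_comm]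
    exact (hξ' (X s)).hasGradientAt.comp_hasDerivWithinAt (hX s hs)
  · exact (hV s hs).inner ℝ ((hgrad (X s)).hasFDerivAt.comp_hasDerivWithinAt s (hX s hs))

/-- **Time–angle relation:** for a characteristic trajectory `(X,V)` of a continuous field `E`
between two bounces (`ξ(X(a)) = ξ(X(b)) = 0`), the normal component of the velocity at either
bounce is controlled by the duration of the bounce interval times the maximal normal
acceleration `sup_{[a,b]} |V·(∇²ξ∘X)V + E·(∇ξ∘X)|`. -/
theorem time_angle_relation
    (ξ : EuclideanSpace ℝ (Fin 3) → ℝ) (hξ : ContDiff ℝ 2 ξ)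
    (E : ℝ → EuclideanSpace ℝ (Fin 3) → EuclideanSpace ℝ (Fin 3))
    (hE : Continuous (fun p : ℝ × EuclideanSpace ℝ (Fin 3) => E p.1 p.2))
    (a b : ℝ) (hab : a < b)
    (X V : ℝ → EuclideanSpace ℝ (Fin 3))
    (hX : ∀ s ∈ Icc a b, HasDerivWithinAt X (V s) (Icc a b) s)
    (hV : ∀ s ∈ Icc a b, HasDerivWithinAt V (E s (X s)) (Icc a b) s)
    (ha0 : ξ (X a) = 0) (hb0 : ξ (X b) = 0) :
    ∀ K : ℝ,
      (∀ s ∈ Icc a b,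
        |⟪V s, (fderiv ℝ (gradient ξ) (X s)) (V s)⟫ + ⟪E s (X s), gradient ξ (X s)⟫| ≤ K) →
      |⟪V b, gradient ξ (X b)⟫| ≤ ((b - a) / 2) * K ∧
      |⟪V a, gradient ξ (X a)⟫| ≤ ((b - a) / 2) * K :=
  time_angle_relation_general ξ hξ E a b hab X V hX hV ha0 hb0
end
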